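/- Let A : [0,∞) → gl_n(ℝ) be a differentiable solution of A' = -tr(S(A)²)·A + (1/2)[A,[A,Aᵗ]] - (1/2)tr(A)·[A,Aᵗ] defined for all t ≥ 0. Then tr(S(A(t))²) ≤ 1/(2t + tr(S(A(0))²)⁻¹) for all t > 0 (assuming A(0) is not skew-symmetric, so tr(S(A(0))²) > 0). In particular tr(S(A(t))²) → 0 as t → ∞. -/

import Mathlib

open Matrix Filter

noncomputable section

abbrev Mat (n : ℕ) := Matrix (Fin n) (Fin n) ℝ

/-- Commutator bracket of matrices. -/
def bkt {n : ℕ} (X Y : Mat n) : Mat n := X * Y - Y * X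

/-- Frobenius inner product ⟨X,Y⟩ = tr(XYᵗ). -/
def frob {n : ℕ} (X Y : Mat n) : ℝ := Matrix.trace (X * Yᵀ)

/-- Squared Frobenius norm ‖X‖² = tr(XXᵗ). -/
def sqnorm {n : ℕ} (X : Mat n) : ℝ := frob X X

/-- Symmetric part S(X) = (X+Xᵗ)/2. -/
def symPart {n : ℕ} (X : Mat n) : Mat n := (1/2 : ℝ) • (X + Xᵀ)

/-- Right-hand side of the bracket flow ODE. -/
def rhs {n : ℕ} (A : Mat n) : Mat n :=
  (-(Matrix.trace (symPart A * symPart A))) • A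
    + (1/2 : ℝ) • bkt A (bkt A Aᵀ)
    - ((1/2 : ℝ) * Matrix.trace A) • bkt A Aᵀ


/-! With `S = S(A)`, the identities `tr([X,Y] Z) = tr(Y [Z,X])` and `[S,A] = -½[A,Aᵗ]` give
`tr(rhs(A) S) = -tr(S²)² - ¼ ‖[A,Aᵗ]‖²`, so `f = tr(S²)` satisfies `f' = 2 tr(rhs(A) S) ≤ -2f²`.
While `f > 0` this makes `1/f - 2t` nondecreasing, which is the comparison bound; since `f ≥ 0`,
the bound forces `f → 0`. -/

variable {n : ℕ}

lemma sqnorm_nonneg (X : Mat n) : 0 ≤ sqnorm X := by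
  simpa [sqnorm, frob, conjTranspose_eq_transpose_of_trivial] using
    (posSemidef_self_mul_conjTranspose X).trace_nonneg

lemma sqnorm_pos {X : Mat n} (hX : X ≠ 0) : 0 < sqnorm X := by
  refine (sqnorm_nonneg X).lt_of_ne' fun h => hX ?_
  rw [← trace_mul_conjTranspose_self_eq_zero_iff, conjTranspose_eq_transpose_of_trivial]
  exact h

lemma symPart_transpose (X : Mat n) : (symPart X)ᵀ = symPart X := by
  simp [symPart, add_comm]

lemma symPart_eq_zero_iff {X : Mat n} : symPart X = 0 ↔ Xᵀ = -X := by
  rw [symPart, smul_eq_zero, add_eq_zero_iff_neg_eq', eq_comm, neg_eq_iff_eq_neg]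
  norm_num

lemma trace_symPart_mul_self (X : Mat n) :
    trace (symPart X * symPart X) = sqnorm (symPart X) := by
  rw [sqnorm, frob, symPart_transpose]

lemma trace_mul_of_transpose_eq {m R : Type*} [Fintype m] [CommSemiring R] {X S : Matrix m m R}
    (hS : Sᵀ = S) :
    trace (Xᵀ * S) = trace (X * S) := by
  conv_lhs => rw [← hS, ← transpose_mul, trace_transpose, trace_mul_comm]

lemma trace_symPart_mul {X S : Mat n} (hS : Sᵀ = S) :
    trace (symPart X * S) = trace (X * S) := by
  rw [symPart, smul_mul_assoc, add_mul, trace_smul, trace_add, trace_mul_of_transpose_eq hS]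
  norm_num; ring

lemma trace_bkt_mul (X Y Z : Mat n) : trace (bkt X Y * Z) = trace (Y * bkt Z X) := by
  simp only [bkt, sub_mul, mul_sub, trace_sub, mul_assoc]
  rw [trace_mul_comm X, mul_assoc]

lemma bkt_self_transpose_transpose (X : Mat n) : (bkt X Xᵀ)ᵀ = bkt X Xᵀ := by
  simp [bkt, transpose_mul]

lemma bkt_symPart_self (X : Mat n) : bkt (symPart X) X = -(1 / 2 : ℝ) • bkt X Xᵀ := by
  simp only [bkt, symPart, smul_mul_assoc, mul_smul_comm, add_mul, mul_add]
  module

lemma trace_bkt_self_transpose_mul_symPart (X : Mat n) :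
    trace (bkt X Xᵀ * symPart X) = 0 := by
  rw [trace_bkt_mul, bkt_symPart_self, mul_smul_comm, trace_smul, bkt, mul_sub, trace_sub,
    ← mul_assoc, trace_mul_cycle, ← mul_assoc, sub_self, smul_zero]

lemma trace_rhs_mul_symPart (X : Mat n) :
    trace (rhs X * symPart X) =
      -trace (symPart X * symPart X) ^ 2 - (1 / 4) * sqnorm (bkt X Xᵀ) := by
  simp only [rhs, add_mul, sub_mul, smul_mul_assoc, trace_add, trace_sub, trace_smul,
    trace_bkt_self_transpose_mul_symPart, trace_bkt_mul X (bkt X Xᵀ), bkt_symPart_self,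
    mul_smul_comm, sqnorm, frob, bkt_self_transpose_transpose]
  rw [← trace_symPart_mul (X := X) (symPart_transpose X)]
  simp only [smul_eq_mul]; ring

lemma trace_rhs_mul_symPart_le (X : Mat n) :
    trace (rhs X * symPart X) ≤ -trace (symPart X * symPart X) ^ 2 := by
  rw [trace_rhs_mul_symPart]
  linarith [sqnorm_nonneg (bkt X Xᵀ)]

lemma hasDerivAt_trace_mul {𝕜 : Type*} [NontriviallyNormedField 𝕜] {m p : Type*} [Fintype m]
    [Fintype p] {A : 𝕜 → Matrix m p 𝕜} {B : 𝕜 → Matrix p m 𝕜} {A' : Matrix m p 𝕜}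
    {B' : Matrix p m 𝕜} {t : 𝕜} (hA : ∀ i j, HasDerivAt (fun s => A s i j) (A' i j) t)
    (hB : ∀ i j, HasDerivAt (fun s => B s i j) (B' i j) t) :
    HasDerivAt (fun s => trace (A s * B s)) (trace (A' * B t + A t * B')) t := by
  have hsum : trace (A' * B t + A t * B') =
      ∑ i, ∑ j, (A' i j * B t j i + A t i j * B' j i) := by
    simp only [trace, diag, Matrix.add_apply, mul_apply, Finset.sum_add_distrib]
  rw [hsum]
  simp only [trace, diag, mul_apply]
  exact HasDerivAt.fun_sum fun i _ => HasDerivAt.fun_sum fun j _ => (hA i j).fun_mul (hB j i)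

lemma hasDerivAt_symPart_apply {A : ℝ → Mat n} {A' : Mat n} {t : ℝ}
    (hA : ∀ i j, HasDerivAt (fun s => A s i j) (A' i j) t) (i j : Fin n) :
    HasDerivAt (fun s => symPart (A s) i j) (symPart A' i j) t := by
  simp only [symPart, Matrix.smul_apply, Matrix.add_apply, transpose_apply, smul_eq_mul]
  exact ((hA i j).add (hA j i)).const_mul _

lemma hasDerivAt_trace_symPart_mul_self {A : ℝ → Mat n} {A' : Mat n} {t : ℝ}
    (hA : ∀ i j, HasDerivAt (fun s => A s i j) (A' i j) t) :
    HasDerivAt (fun s => trace (symPart (A s) * symPart (A s)))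
      (2 * trace (A' * symPart (A t))) t := by
  refine (hasDerivAt_trace_mul (hasDerivAt_symPart_apply hA)
    (hasDerivAt_symPart_apply hA)).congr_deriv ?_
  rw [trace_add, trace_mul_comm (symPart (A t)), trace_symPart_mul (symPart_transpose _)]
  ring

lemma le_one_div_two_mul_add_inv_of_hasDerivAt {F D : ℝ → ℝ}
    (hF : ∀ t, 0 ≤ t → HasDerivAt F (D t) t) (hD : ∀ t, 0 ≤ t → D t ≤ -2 * F t ^ 2)
    (hF0 : 0 < F 0) {t : ℝ} (ht : 0 ≤ t) : F t ≤ 1 / (2 * t + (F 0)⁻¹) := by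
  rcases le_or_gt (F t) 0 with hFt | hFt
  · exact hFt.trans (by positivity)
  have hderiv : ∀ u ∈ Set.Icc 0 t, HasDerivAt F (D u) u := fun u hu => hF u hu.1
  have hanti : AntitoneOn F (Set.Icc 0 t) :=
    antitoneOn_of_hasDerivWithinAt_nonpos (convex_Icc 0 t)
      (fun u hu => (hderiv u hu).continuousAt.continuousWithinAt)
      (fun u hu => (hderiv u (interior_subset hu)).hasDerivWithinAt)
      (fun u hu => (hD u (interior_subset hu).1).trans (by nlinarith))
  have hpos : ∀ u ∈ Set.Icc 0 t, 0 < F u := fun u hu =>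
    hFt.trans_le (hanti hu (Set.right_mem_Icc.2 ht) hu.2)
  have hderiv_inv : ∀ u ∈ Set.Icc 0 t,
      HasDerivAt (fun v => (F v)⁻¹ - 2 * v) (-D u / F u ^ 2 - 2) u := fun u hu => by
    simpa using ((hderiv u hu).fun_inv (hpos u hu).ne').fun_sub ((hasDerivAt_id' u).const_mul 2)
  have hmono : MonotoneOn (fun v => (F v)⁻¹ - 2 * v) (Set.Icc 0 t) :=
    monotoneOn_of_hasDerivWithinAt_nonneg (convex_Icc 0 t)
      (fun u hu => (hderiv_inv u hu).continuousAt.continuousWithinAt)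
      (fun u hu => (hderiv_inv u (interior_subset hu)).hasDerivWithinAt)
      (fun u hu => by
        have hu' := interior_subset hu
        rw [sub_nonneg, le_div_iff₀ (pow_pos (hpos u hu') 2)]
        linarith [hD u hu'.1])
  have h := hmono (Set.left_mem_Icc.2 ht) (Set.right_mem_Icc.2 ht) ht
  rw [le_one_div hFt (by positivity), one_div]
  simp only [mul_zero, sub_zero] at h
  linarith

lemma tendsto_one_div_two_mul_add_atTop (c : ℝ) :
    Tendsto (fun t : ℝ => 1 / (2 * t + c)) atTop (nhds 0) := by
  simpa only [one_div, Pi.inv_def, id] using (tendsto_atTop_add_const_right _ c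
    (tendsto_id.const_mul_atTop two_pos)).inv_tendsto_atTop

theorem stmt11 {n : ℕ} (A : ℝ → Mat n)
    (hA : ∀ t : ℝ, 0 ≤ t → ∀ i j, HasDerivAt (fun s => A s i j) (rhs (A t) i j) t)
    (hskew : (A 0)ᵀ ≠ -(A 0)) :
    (∀ t : ℝ, 0 < t →
      Matrix.trace (symPart (A t) * symPart (A t)) ≤
        1 / (2 * t + (Matrix.trace (symPart (A 0) * symPart (A 0)))⁻¹)) ∧
    Filter.Tendsto (fun t => Matrix.trace (symPart (A t) * symPart (A t)))
      Filter.atTop (nhds 0) := by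
  have hbound : ∀ t : ℝ, 0 ≤ t → trace (symPart (A t) * symPart (A t)) ≤
      1 / (2 * t + (trace (symPart (A 0) * symPart (A 0)))⁻¹) := by
    refine fun t => le_one_div_two_mul_add_inv_of_hasDerivAt
      (fun t ht => hasDerivAt_trace_symPart_mul_self (hA t ht)) (fun t _ => ?_) ?_
    · linarith [trace_rhs_mul_symPart_le (A t)]
    · rw [trace_symPart_mul_self]
      exact sqnorm_pos (mt symPart_eq_zero_iff.1 hskew)
  refine ⟨fun t ht => hbound t ht.le, squeeze_zero' ?_ ?_
    (tendsto_one_div_two_mul_add_atTop (trace (symPart (A 0) * symPart (A 0)))⁻¹)⟩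
  · exact Eventually.of_forall fun t => trace_symPart_mul_self (A t) ▸ sqnorm_nonneg _
  · filter_upwards [eventually_ge_atTop 0] with t ht using hbound t ht
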